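/- arXiv:1910.09499 — 2 statements merged into one kernel-verified Lean document; each statement's English description precedes it below -/
import Mathlib

section
/- Let y be a random variable with density p(y|θ) = c(y,φ)·exp((yθ − b(θ))/φ) (a one-parameter exponential family with dispersion φ > 0), and suppose sup_{θ∈ℝ} b''(θ) ≤ U for some U > 0. Then the residual ε = y − b'(θ) is sub-Gaussian with variance proxy φU; that is, for all t ∈ ℝ, E[exp(tε)] ≤ exp(φU t² / 2). -/
/-!
Tilting the density at `θ` by `exp (t y)` gives the density at `θ + tφ` up to a constant, so by
normalisation the moment generating function of the residual is
`exp ((b (θ + tφ) - b θ) / φ - t b' θ)`.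
The bound `b'' ≤ U` makes `b` lie below its second-order Taylor polynomial with curvature `U`,
which turns the exponent into at most `φ U t² / 2`.
-/

open MeasureTheory Real

theorem le_add_deriv_mul_add_of_deriv_deriv_le {f : ℝ → ℝ} {U : ℝ} (hf : Differentiable ℝ f)
    (hf' : Differentiable ℝ (deriv f)) (hU : ∀ z, deriv (deriv f) z ≤ U) (x y : ℝ) :
    f y ≤ f x + deriv f x * (y - x) + U * (y - x) ^ 2 / 2 := by
  set a := U * x - deriv f x
  -- `g` is convex with a critical point at `x`, hence minimal there.
  set g : ℝ → ℝ := fun z => U * z ^ 2 / 2 - f z - a * z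
  have hg : ∀ z, HasDerivAt g (U * z - deriv f z - a) z := fun z => by
    refine (((hasDerivAt_pow 2 z).const_mul U).div_const 2).fun_sub (hf z).hasDerivAt
      |>.fun_sub (hasDerivAt_const_mul a) |>.congr_deriv ?_
    norm_num
    ring
  have hg_deriv : deriv g = fun z => U * z - deriv f z - a := funext fun z => (hg z).deriv
  have hg' : ∀ z, HasDerivAt (deriv g) (U - deriv (deriv f) z) z := fun z => by
    rw [hg_deriv]
    simpa using (((hasDerivAt_id z).const_mul U).sub (hf' z).hasDerivAt).sub_const a
  have hconvex : ConvexOn ℝ Set.univ g :=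
    convexOn_univ_of_deriv2_nonneg (fun z => (hg z).differentiableAt)
      (fun z => (hg' z).differentiableAt) fun z => by
        simpa [(hg' z).deriv] using hU z
  have hcrit : derivWithin g (Set.Ioi x) x = 0 := by
    rw [(hg x).hasDerivWithinAt.derivWithin (uniqueDiffWithinAt_Ioi x)]
    ring
  have hmin : g x ≤ g y :=
    hconvex.isMinOn_of_rightDeriv_eq_zero (by simp) hcrit (Set.mem_univ y)
  simp only [g, a] at hmin
  linear_combination hmin

theorem integral_expFamily_mul_exp_eq {b c : ℝ → ℝ} {φ : ℝ} (hφ : φ ≠ 0)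
    (hnorm : ∀ s : ℝ, ∫ y : ℝ, c y * exp ((y * s - b s) / φ) = 1) (θ t m : ℝ) :
    ∫ y : ℝ, c y * exp ((y * θ - b θ) / φ) * exp (t * (y - m))
      = exp ((b (θ + t * φ) - b θ) / φ - t * m) := by
  have htilt : ∀ y : ℝ, c y * exp ((y * θ - b θ) / φ) * exp (t * (y - m))
      = c y * exp ((y * (θ + t * φ) - b (θ + t * φ)) / φ)
        * exp ((b (θ + t * φ) - b θ) / φ - t * m) := fun y => by
    rw [mul_assoc, mul_assoc, ← exp_add, ← exp_add]
    congr 2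
    field_simp
    ring
  simp_rw [htilt]
  rw [integral_mul_const, hnorm, one_mul]

theorem stmt_0_general (b c : ℝ → ℝ) (φ U θ : ℝ) (hφ : 0 < φ)
    (hb1 : Differentiable ℝ b) (hb2 : Differentiable ℝ (deriv b))
    (hbU : ∀ x : ℝ, deriv (deriv b) x ≤ U)
    (hnorm : ∀ s : ℝ, ∫ y : ℝ, c y * Real.exp ((y * s - b s) / φ) = 1) :
    ∀ t : ℝ, (∫ y : ℝ, c y * Real.exp ((y * θ - b θ) / φ) * Real.exp (t * (y - deriv b θ)))
      ≤ Real.exp (φ * U * t ^ 2 / 2) := by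
  intro t
  rw [integral_expFamily_mul_exp_eq hφ.ne' hnorm, exp_le_exp, sub_le_iff_le_add,
    div_le_iff₀ hφ]
  have htaylor := le_add_deriv_mul_add_of_deriv_deriv_le hb1 hb2 hbU θ (θ + t * φ)
  rw [add_sub_cancel_left] at htaylor
  linarith

/-- In a one-parameter exponential family with density
`p(y|θ) = c(y,φ)exp((yθ − b(θ))/φ)` whose log-partition `b` satisfies `b'' ≤ U`,
the residual `ε = y − b'(θ)` is sub-Gaussian with variance proxy `φU`. -/
theorem stmt_0 (b c : ℝ → ℝ) (φ U θ : ℝ) (hφ : 0 < φ) (hU : 0 < U)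
    (hb1 : Differentiable ℝ b) (hb2 : Differentiable ℝ (deriv b))
    (hbU : ∀ x : ℝ, deriv (deriv b) x ≤ U)
    (hnorm : ∀ s : ℝ, ∫ y : ℝ, c y * Real.exp ((y * s - b s) / φ) = 1)
    (hint : ∀ t : ℝ, Integrable (fun y : ℝ =>
      c y * Real.exp ((y * θ - b θ) / φ) * Real.exp (t * (y - deriv b θ)))) :
    ∀ t : ℝ, (∫ y : ℝ, c y * Real.exp ((y * θ - b θ) / φ) * Real.exp (t * (y - deriv b θ)))
      ≤ Real.exp (φ * U * t ^ 2 / 2) :=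
  stmt_0_general b c φ U θ hφ hb1 hb2 hbU hnorm
end

section
/- Let U and Û be m×n real matrices with orthonormal columns (m > n), and let R be an m×m invertible matrix. If sinΘ(U, Û) ≤ L for some L ∈ [0,1], then sinΘ(span(RU), span(RÛ)) ≤ (σ_max(R)/σ_min(R))² · L. -/
open Real Matrix
open scoped RealInnerProductSpace

/-- Euclidean norm of a vector. -/
noncomputable def enorm' {n : ℕ} (v : Fin n → ℝ) : ℝ := Real.sqrt (∑ i, v i ^ 2)

/-- Smallest singular value: infimum of `‖Xv‖` over unit vectors `v`. -/
noncomputable def sigmaMin {d p : ℕ} (X : Matrix (Fin d) (Fin p) ℝ) : ℝ :=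
  sInf {r : ℝ | ∃ v : Fin p → ℝ, enorm' v = 1 ∧ r = enorm' (X.mulVec v)}

/-- Largest singular value: supremum of `‖Xv‖` over unit vectors `v`. -/
noncomputable def sigmaMax {d p : ℕ} (X : Matrix (Fin d) (Fin p) ℝ) : ℝ :=
  sSup {r : ℝ | ∃ v : Fin p → ℝ, enorm' v = 1 ∧ r = enorm' (X.mulVec v)}

/-- Column span of a matrix, as a subspace of Euclidean space. -/
noncomputable def colSpan {m n : ℕ} (A : Matrix (Fin m) (Fin n) ℝ) :
    Submodule ℝ (EuclideanSpace ℝ (Fin m)) :=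
  Submodule.span ℝ (Set.range fun i : Fin n => (WithLp.toLp 2 (fun j => A j i) : EuclideanSpace ℝ (Fin m)))

/-- Angle distance between two subspaces:
`sinΘ(S,T) = sup{⟨x,y⟩/(‖x‖‖y‖) : x ∈ S, y ∈ Tᗮ}`. -/
noncomputable def sinTheta {m : ℕ} (S T : Submodule ℝ (EuclideanSpace ℝ (Fin m))) : ℝ :=
  sSup {r : ℝ | ∃ x ∈ S, ∃ y ∈ Tᗮ, x ≠ 0 ∧ y ≠ 0 ∧ r = ⟪x, y⟫ / (‖x‖ * ‖y‖)}

/-!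
Write `x ∈ span(RU)` as `x = R u` with `u ∈ span U`; a vector `y` is orthogonal to `span(RÛ)`
exactly when `Rᵀ y` is orthogonal to `span Û`, and `⟪x, y⟫ = ⟪u, Rᵀ y⟫`. Since
`σ_min ‖u‖ ≤ ‖x‖` and `‖Rᵀ y‖ ≤ σ_max ‖y‖`, this gives `sinΘ(RU, RÛ) ≤ κ sinΘ(U, Û)` with
`κ = σ_max / σ_min ≥ 1`, and `κ ≤ κ²`.
-/

theorem enorm'_eq_norm {n : ℕ} (v : Fin n → ℝ) :
    enorm' v = ‖(WithLp.toLp 2 v : EuclideanSpace ℝ (Fin n))‖ := by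
  simp [enorm', EuclideanSpace.norm_eq]

section singularValues

variable {d p : ℕ} (X : Matrix (Fin d) (Fin p) ℝ)

def unitImageNorms : Set ℝ := {r : ℝ | ∃ v : Fin p → ℝ, enorm' v = 1 ∧ r = enorm' (X.mulVec v)}

theorem mem_unitImageNorms_iff {r : ℝ} :
    r ∈ unitImageNorms X ↔ ∃ v : EuclideanSpace ℝ (Fin p), ‖v‖ = 1 ∧ r = ‖toEuclideanLin X v‖ := by
  constructor
  · rintro ⟨v, hv, rfl⟩
    exact ⟨WithLp.toLp 2 v, by rwa [← enorm'_eq_norm], enorm'_eq_norm _⟩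
  · rintro ⟨v, hv, rfl⟩
    exact ⟨v.ofLp, by rwa [enorm'_eq_norm], (enorm'_eq_norm _).symm⟩

theorem norm_toEuclideanLin_div_norm_mem {v : EuclideanSpace ℝ (Fin p)} (hv : v ≠ 0) :
    ‖toEuclideanLin X v‖ / ‖v‖ ∈ unitImageNorms X := by
  refine (mem_unitImageNorms_iff X).2 ⟨‖v‖⁻¹ • v, norm_smul_inv_norm hv, ?_⟩
  rw [map_smul, norm_smul, norm_inv, norm_norm, div_eq_inv_mul]

theorem unitImageNorms_bddBelow : BddBelow (unitImageNorms X) :=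
  ⟨0, fun _ ⟨_, _, hr⟩ => hr ▸ Real.sqrt_nonneg _⟩

theorem unitImageNorms_bddAbove : BddAbove (unitImageNorms X) := by
  refine ⟨‖LinearMap.toContinuousLinearMap (toEuclideanLin X)‖, fun r hr => ?_⟩
  obtain ⟨v, hv, rfl⟩ := (mem_unitImageNorms_iff X).1 hr
  simpa [hv] using (LinearMap.toContinuousLinearMap (toEuclideanLin X)).le_opNorm v

theorem unitImageNorms_nonempty (hp : 0 < p) : (unitImageNorms X).Nonempty :=
  ⟨_, (mem_unitImageNorms_iff X).2 ⟨EuclideanSpace.single ⟨0, hp⟩ 1, by simp, rfl⟩⟩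

theorem sigmaMax_nonneg : 0 ≤ sigmaMax X :=
  Real.sSup_nonneg fun _ ⟨_, _, hr⟩ => hr ▸ Real.sqrt_nonneg _

theorem sigmaMin_le_sigmaMax (hp : 0 < p) : sigmaMin X ≤ sigmaMax X :=
  csInf_le_csSup (unitImageNorms_nonempty X hp) (unitImageNorms_bddBelow X)
    (unitImageNorms_bddAbove X)

theorem norm_toEuclideanLin_le (v : EuclideanSpace ℝ (Fin p)) :
    ‖toEuclideanLin X v‖ ≤ sigmaMax X * ‖v‖ := by
  rcases eq_or_ne v 0 with rfl | hv
  · simp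
  rw [← div_le_iff₀ (norm_pos_iff.2 hv)]
  exact le_csSup (unitImageNorms_bddAbove X) (norm_toEuclideanLin_div_norm_mem X hv)

theorem sigmaMin_mul_norm_le (v : EuclideanSpace ℝ (Fin p)) :
    sigmaMin X * ‖v‖ ≤ ‖toEuclideanLin X v‖ := by
  rcases eq_or_ne v 0 with rfl | hv
  · simp
  rw [← le_div_iff₀ (norm_pos_iff.2 hv)]
  exact csInf_le (unitImageNorms_bddBelow X) (norm_toEuclideanLin_div_norm_mem X hv)

theorem le_sigmaMin (hp : 0 < p) {c : ℝ} (h : ∀ v, c * ‖v‖ ≤ ‖toEuclideanLin X v‖) :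
    c ≤ sigmaMin X := by
  refine le_csInf (unitImageNorms_nonempty X hp) fun r hr => ?_
  obtain ⟨v, hv, rfl⟩ := (mem_unitImageNorms_iff X).1 hr
  simpa [hv] using h v

end singularValues

theorem norm_toEuclideanCLM_le_sigmaMax {m : ℕ} (R : Matrix (Fin m) (Fin m) ℝ) :
    ‖toEuclideanCLM (𝕜 := ℝ) R‖ ≤ sigmaMax R :=
  ContinuousLinearMap.opNorm_le_bound _ (sigmaMax_nonneg R) (norm_toEuclideanLin_le R)

theorem sigmaMin_pos {m : ℕ} (hm : 0 < m) {R : Matrix (Fin m) (Fin m) ℝ} (hR : IsUnit R) :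
    0 < sigmaMin R := by
  have : Nonempty (Fin m) := ⟨⟨0, hm⟩⟩
  obtain ⟨g, hg⟩ := (hR.map (toEuclideanCLM (𝕜 := ℝ))).exists_left_inv
  have hg0 : 0 < ‖g‖ := norm_pos_iff.2 (left_ne_zero_of_mul_eq_one hg)
  refine (inv_pos.2 hg0).trans_le (le_sigmaMin R hm fun v => ?_)
  rw [inv_mul_le_iff₀ hg0]
  calc ‖v‖ = ‖(g * toEuclideanCLM (𝕜 := ℝ) R) v‖ := by rw [hg]; rfl
    _ ≤ ‖g‖ * ‖toEuclideanLin R v‖ := g.le_opNorm _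

theorem Submodule.mem_orthogonal_map_iff {E F : Type*}
    [NormedAddCommGroup E] [InnerProductSpace ℝ E] [CompleteSpace E]
    [NormedAddCommGroup F] [InnerProductSpace ℝ F] [CompleteSpace F]
    (f : E →L[ℝ] F) (S : Submodule ℝ E) (y : F) :
    y ∈ (S.map f.toLinearMap)ᗮ ↔ ContinuousLinearMap.adjoint f y ∈ Sᗮ := by
  simp [Submodule.mem_orthogonal, ContinuousLinearMap.adjoint_inner_right]

theorem colSpan_mul {k m n : ℕ} (R : Matrix (Fin k) (Fin m) ℝ) (A : Matrix (Fin m) (Fin n) ℝ) :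
    colSpan (R * A) = (colSpan A).map (toEuclideanLin R) := by
  rw [colSpan, colSpan, Submodule.map_span, ← Set.range_comp]
  rfl

section sinTheta

variable {m : ℕ}

theorem sinTheta_nonneg (S T : Submodule ℝ (EuclideanSpace ℝ (Fin m))) : 0 ≤ sinTheta S T := by
  by_cases h : ∃ x ∈ S, ∃ y ∈ Tᗮ, x ≠ 0 ∧ y ≠ 0
  · obtain ⟨x, hx, y, hy, hx0, hy0⟩ := h
    refine Real.sSup_nonneg' ?_
    -- replacing `y` by `-y` if necessary makes the cosine nonnegative
    rcases le_total 0 ⟪x, y⟫ with hxy | hxy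
    · exact ⟨_, ⟨x, hx, y, hy, hx0, hy0, rfl⟩, by positivity⟩
    · refine ⟨_, ⟨x, hx, -y, T.orthogonal.neg_mem hy, hx0, neg_ne_zero.2 hy0, rfl⟩, ?_⟩
      rw [inner_neg_right, norm_neg]
      exact div_nonneg (neg_nonneg.2 hxy) (by positivity)
  · exact Real.sSup_nonneg fun r ⟨x, hx, y, hy, hx0, hy0, _⟩ => (h ⟨x, hx, y, hy, hx0, hy0⟩).elim

theorem sinTheta_bddAbove (S T : Submodule ℝ (EuclideanSpace ℝ (Fin m))) :
    BddAbove {r : ℝ | ∃ x ∈ S, ∃ y ∈ Tᗮ, x ≠ 0 ∧ y ≠ 0 ∧ r = ⟪x, y⟫ / (‖x‖ * ‖y‖)} := by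
  refine ⟨1, ?_⟩
  rintro r ⟨x, _, y, _, hx0, hy0, rfl⟩
  exact div_le_one_of_le₀ (real_inner_le_norm x y) (by positivity)

theorem inner_le_sinTheta_mul {S T : Submodule ℝ (EuclideanSpace ℝ (Fin m))}
    {x y : EuclideanSpace ℝ (Fin m)} (hx : x ∈ S) (hy : y ∈ Tᗮ) :
    ⟪x, y⟫ ≤ sinTheta S T * (‖x‖ * ‖y‖) := by
  rcases eq_or_ne x 0 with rfl | hx0
  · simp
  rcases eq_or_ne y 0 with rfl | hy0
  · simp
  rw [← div_le_iff₀ (by positivity)]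
  exact le_csSup (sinTheta_bddAbove S T) ⟨x, hx, y, hy, hx0, hy0, rfl⟩

theorem sinTheta_le {S T : Submodule ℝ (EuclideanSpace ℝ (Fin m))} {c : ℝ} (hc : 0 ≤ c)
    (h : ∀ x ∈ S, ∀ y ∈ Tᗮ, ⟪x, y⟫ ≤ c * (‖x‖ * ‖y‖)) : sinTheta S T ≤ c := by
  refine Real.sSup_le ?_ hc
  rintro r ⟨x, hx, y, hy, hx0, hy0, rfl⟩
  rw [div_le_iff₀ (by positivity)]
  exact h x hx y hy

open ContinuousLinearMap in
open scoped InnerProduct in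
theorem sinTheta_map_le {k : ℕ} (f : EuclideanSpace ℝ (Fin m) →L[ℝ] EuclideanSpace ℝ (Fin k))
    {a : ℝ} (ha : 0 < a) (hf : ∀ u, a * ‖u‖ ≤ ‖f u‖)
    (S T : Submodule ℝ (EuclideanSpace ℝ (Fin m))) :
    sinTheta (S.map f.toLinearMap) (T.map f.toLinearMap) ≤ ‖f‖ / a * sinTheta S T := by
  have hs := sinTheta_nonneg S T
  refine sinTheta_le (by positivity) ?_
  rintro _ ⟨u, hu, rfl⟩ y hy
  have hu' : ‖u‖ ≤ ‖f u‖ / a := by rw [le_div_iff₀ ha, mul_comm]; exact hf u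
  have hy' : ‖(f†) y‖ ≤ ‖f‖ * ‖y‖ := by
    simpa only [LinearIsometryEquiv.norm_map] using (f†).le_opNorm y
  calc ⟪f u, y⟫ = ⟪u, (f†) y⟫ := (adjoint_inner_right f u y).symm
    _ ≤ sinTheta S T * (‖u‖ * ‖(f†) y‖) :=
      inner_le_sinTheta_mul hu ((Submodule.mem_orthogonal_map_iff f T y).1 hy)
    _ ≤ sinTheta S T * (‖f u‖ / a * (‖f‖ * ‖y‖)) := by gcongr
    _ = ‖f‖ / a * sinTheta S T * (‖f u‖ * ‖y‖) := by ring

end sinTheta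

theorem stmt_4_general {m n : ℕ} (hmn : n < m) (U Uhat : Matrix (Fin m) (Fin n) ℝ)
    (R : Matrix (Fin m) (Fin m) ℝ) (hR : IsUnit R)
    (L : ℝ)
    (h : sinTheta (colSpan U) (colSpan Uhat) ≤ L) :
    sinTheta (colSpan (R * U)) (colSpan (R * Uhat)) ≤ (sigmaMax R / sigmaMin R) ^ 2 * L := by
  have hm : 0 < m := n.zero_le.trans_lt hmn
  have hmin : 0 < sigmaMin R := sigmaMin_pos hm hR
  have hκ : 1 ≤ sigmaMax R / sigmaMin R := (one_le_div hmin).2 (sigmaMin_le_sigmaMax R hm)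
  have hs := sinTheta_nonneg (colSpan U) (colSpan Uhat)
  rw [colSpan_mul, colSpan_mul, ← coe_toEuclideanCLM_eq_toEuclideanLin]
  calc _ ≤ ‖toEuclideanCLM (𝕜 := ℝ) R‖ / sigmaMin R * sinTheta (colSpan U) (colSpan Uhat) :=
        sinTheta_map_le _ hmin (fun u => by
          rw [← ContinuousLinearMap.coe_coe, coe_toEuclideanCLM_eq_toEuclideanLin]
          exact sigmaMin_mul_norm_le R u) _ _
    _ ≤ sigmaMax R / sigmaMin R * L := by
        gcongr
        exact norm_toEuclideanCLM_le_sigmaMax R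
    _ ≤ (sigmaMax R / sigmaMin R) ^ 2 * L := by
        gcongr
        · exact hs.trans h
        · exact le_self_pow₀ hκ two_ne_zero

/-- angle distance under an invertible linear transformation `R`:
if `sinΘ(U,Û) ≤ L` then `sinΘ(RU,RÛ) ≤ (σ_max(R)/σ_min(R))² L`. -/
theorem stmt_4 {m n : ℕ} (hmn : n < m) (U Uhat : Matrix (Fin m) (Fin n) ℝ)
    (hU : Uᵀ * U = 1) (hUhat : Uhatᵀ * Uhat = 1)
    (R : Matrix (Fin m) (Fin m) ℝ) (hR : IsUnit R)
    (L : ℝ) (hL : L ∈ Set.Icc (0 : ℝ) 1)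
    (h : sinTheta (colSpan U) (colSpan Uhat) ≤ L) :
    sinTheta (colSpan (R * U)) (colSpan (R * Uhat)) ≤ (sigmaMax R / sigmaMin R) ^ 2 * L :=
  stmt_4_general hmn U Uhat R hR L h
end
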